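/- Let σ > 0, d ≥ 1 an integer, and a, b, c reals with a, b > 0 and δ·a² > c² + b² for some 1/4 < δ ≤ 1. Set ā = √(c²+b²) and b̄ = a·b/ā. If a/(2σ) ≤ r(√(2π)/(2d)), then [1/(d+1) + (d/(d+1))φ_σ(a)]·[1/(d+1) + (d/(d+1))φ_σ(b)] ≥ [1/(d+1) + (d/(d+1))φ_σ(ā)]·[1/(d+1) + (d/(d+1))φ_σ(b̄)], with equality if and only if c = 0. -/

import Mathlib

noncomputable def phi (σ ζ : ℝ) : ℝ :=
  (2 / Real.sqrt (2 * Real.pi)) * ∫ t in (0:ℝ)..(ζ / (2 * σ)), Real.exp (-t ^ 2 / 2)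

noncomputable def f (ζ α : ℝ) : ℝ :=
  (1 - ζ ^ 2) * (α + ∫ t in (0:ℝ)..ζ, Real.exp (-t ^ 2 / 2)) - ζ * Real.exp (-ζ ^ 2 / 2)

/-!
Write `g(ζ) = 1/(d+1) + d/(d+1) φ_σ(ζ)`. Up to a positive factor, `g(ζ) = α + F(ζ/(2σ))` with
`α = √(2π)/(2d)` and `F(x) = ∫₀ˣ e^{-t²/2} dt`. The second derivative of `x ↦ log (α + F(eˣ))` is
`e^{-u²/2} u f(u, α) / (α + F u)²` with `u = eˣ`. Since `∂f/∂ζ = -2ζ(α + F ζ)`, `f(·, α)` is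
strictly decreasing on `[0, ∞)` and hence positive on `[0, r(α))`, so this function is strictly
convex on `x ≤ log r(α)`. For `c ≠ 0` the points
`log b < log ā < log a` satisfy `log ā + log b̄ = log a + log b`, and strict convexity gives
`g(ā) g(b̄) < g(a) g(b)`; for `c = 0` the pair `(ā, b̄)` is `(b, a)`.
-/

open Real Set

theorem StrictConvexOn.map_add_map_lt {s : Set ℝ} {g : ℝ → ℝ} (hg : StrictConvexOn ℝ s g)
    {p q x : ℝ} (hq : q ∈ s) (hp : p ∈ s) (hqx : q < x) (hxp : x < p) :
    g x + g (p + q - x) < g p + g q := by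
  set θ := (x - q) / (p - q)
  have hpq : 0 < p - q := by linarith
  have hθ0 : 0 < θ := div_pos (by linarith) hpq
  have hθ1 : 0 < 1 - θ := by rw [sub_pos, div_lt_one hpq]; linarith
  have hx : θ * p + (1 - θ) * q = x := by
    linarith [show θ * (p - q) = x - q from div_mul_cancel₀ _ hpq.ne']
  have hy : (1 - θ) * p + θ * q = p + q - x := by linarith
  have h₁ := hg.2 hp hq (by linarith) hθ0 hθ1 (by ring)
  have h₂ := hg.2 hp hq (by linarith) hθ1 hθ0 (by ring)
  simp only [smul_eq_mul, hx, hy] at h₁ h₂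
  linarith

noncomputable def gaussPrimitive (x : ℝ) : ℝ := ∫ t in (0:ℝ)..x, exp (-t ^ 2 / 2)

theorem hasDerivAt_gaussPrimitive (x : ℝ) : HasDerivAt gaussPrimitive (exp (-x ^ 2 / 2)) x := by
  have hcont : Continuous fun t : ℝ => exp (-t ^ 2 / 2) := by fun_prop
  exact intervalIntegral.integral_hasDerivAt_right (hcont.intervalIntegrable _ _)
    (hcont.stronglyMeasurableAtFilter _ _) hcont.continuousAt

theorem gaussPrimitive_nonneg {x : ℝ} (hx : 0 ≤ x) : 0 ≤ gaussPrimitive x :=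
  intervalIntegral.integral_nonneg hx fun _ _ => (exp_pos _).le

theorem hasDerivAt_exp_neg_sq_div_two (x : ℝ) :
    HasDerivAt (fun y : ℝ => exp (-y ^ 2 / 2)) (-x * exp (-x ^ 2 / 2)) x := by
  have h : HasDerivAt (fun y : ℝ => -y ^ 2 / 2) (-x) x :=
    (((hasDerivAt_pow 2 x).neg).div_const 2).congr_deriv (by push_cast; ring)
  exact h.exp.congr_deriv (by ring)

theorem f_eq (ζ α : ℝ) : f ζ α = (1 - ζ ^ 2) * (α + gaussPrimitive ζ) - ζ * exp (-ζ ^ 2 / 2) :=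
  rfl

theorem hasDerivAt_f (α ζ : ℝ) : HasDerivAt (fun z => f z α) (-2 * ζ * (α + gaussPrimitive ζ)) ζ := by
  have h := (((hasDerivAt_pow 2 ζ).const_sub 1).mul ((hasDerivAt_gaussPrimitive ζ).const_add α)).sub
    ((hasDerivAt_id' ζ).mul (hasDerivAt_exp_neg_sq_div_two ζ))
  simp only [f_eq]
  exact h.congr_deriv (by push_cast; ring)

theorem f_strictAntiOn {α : ℝ} (hα : 0 < α) : StrictAntiOn (fun z => f z α) (Ici 0) := by
  refine strictAntiOn_of_deriv_neg (convex_Ici 0)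
    (fun z _ => (hasDerivAt_f α z).continuousAt.continuousWithinAt) fun z hz => ?_
  rw [interior_Ici, mem_Ioi] at hz
  rw [(hasDerivAt_f α z).deriv]
  nlinarith [gaussPrimitive_nonneg hz.le]

theorem f_pos_of_lt_of_f_eq_zero {α r u : ℝ} (hα : 0 < α) (hr : f r α = 0) (hu : 0 ≤ u)
    (hur : u < r) : 0 < f u α := by
  simpa [hr] using f_strictAntiOn hα hu (hu.trans hur.le) hur

theorem strictConvexOn_log_add_gaussPrimitive_exp {α r : ℝ} (hα : 0 < α) (hr₀ : 0 < r)
    (hr : f r α = 0) :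
    StrictConvexOn ℝ (Iic (log r)) fun x => log (α + gaussPrimitive (exp x)) := by
  have hpos : ∀ x, 0 < α + gaussPrimitive (exp x) := fun x => by
    linarith [gaussPrimitive_nonneg (exp_pos x).le]
  have hF : ∀ x, HasDerivAt (fun y => α + gaussPrimitive (exp y))
      (exp (-exp x ^ 2 / 2) * exp x) x :=
    fun x => ((hasDerivAt_gaussPrimitive (exp x)).comp x (hasDerivAt_exp x)).const_add α
  have hlog : ∀ x, HasDerivAt (fun y => log (α + gaussPrimitive (exp y)))
      (exp (-exp x ^ 2 / 2) * exp x / (α + gaussPrimitive (exp x))) x :=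
    fun x => (hF x).log (hpos x).ne'
  have hN : ∀ x, HasDerivAt (fun y => exp (-exp y ^ 2 / 2) * exp y)
      (exp (-exp x ^ 2 / 2) * exp x * (1 - exp x ^ 2)) x := fun x =>
    (((hasDerivAt_exp_neg_sq_div_two (exp x)).comp x (hasDerivAt_exp x)).mul
      (hasDerivAt_exp x)).congr_deriv (by simp only [Function.comp_apply]; ring)
  have hderiv2 : ∀ x, deriv^[2] (fun y => log (α + gaussPrimitive (exp y))) x
      = exp (-exp x ^ 2 / 2) * exp x * f (exp x) α / (α + gaussPrimitive (exp x)) ^ 2 := by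
    intro x
    rw [Function.iterate_succ_apply, Function.iterate_one, funext fun y => (hlog y).deriv]
    exact ((hN x).div (hF x) (hpos x).ne').deriv.trans (by rw [f_eq]; ring)
  refine strictConvexOn_of_deriv2_pos (convex_Iic _)
    (fun x _ => (hlog x).continuousAt.continuousWithinAt) fun x hx => ?_
  rw [interior_Iic, mem_Iio, lt_log_iff_exp_lt hr₀] at hx
  rw [hderiv2]
  exact div_pos (mul_pos (mul_pos (exp_pos _) (exp_pos x))
    (f_pos_of_lt_of_f_eq_zero hα hr (exp_pos x).le hx)) (pow_pos (hpos x) 2)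

theorem add_gaussPrimitive_mul_lt {α r u v w : ℝ} (hα : 0 < α) (hr : f r α = 0) (hv : 0 < v)
    (hvw : v < w) (hwu : w < u) (hur : u ≤ r) :
    (α + gaussPrimitive w) * (α + gaussPrimitive (u * v / w)) <
      (α + gaussPrimitive u) * (α + gaussPrimitive v) := by
  have hw : 0 < w := hv.trans hvw
  have hu : 0 < u := hw.trans hwu
  have huvw : 0 < u * v / w := by positivity
  have hpos : ∀ z, 0 < z → 0 < α + gaussPrimitive z := fun z hz => by
    linarith [gaussPrimitive_nonneg hz.le]
  have hlog := (strictConvexOn_log_add_gaussPrimitive_exp hα (hu.trans_le hur) hr).map_add_map_lt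
    (log_le_log hv ((hvw.trans hwu).le.trans hur)) (log_le_log hu hur)
    (log_lt_log hv hvw) (log_lt_log hw hwu)
  have hsum : log u + log v - log w = log (u * v / w) := by
    rw [log_div (by positivity) hw.ne', log_mul hu.ne' hv.ne']
  simp only [hsum, exp_log hu, exp_log hv, exp_log hw, exp_log huvw,
    ← log_mul (hpos _ hw).ne' (hpos _ huvw).ne',
    ← log_mul (hpos _ hu).ne' (hpos _ hv).ne'] at hlog
  exact (log_lt_log_iff (mul_pos (hpos _ hw) (hpos _ huvw))
    (mul_pos (hpos _ hu) (hpos _ hv))).mp hlog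

noncomputable def phiMix (d σ ζ : ℝ) : ℝ := 1 / (d + 1) + d / (d + 1) * phi σ ζ

theorem phiMix_eq {d : ℝ} (hd : 0 < d) (σ ζ : ℝ) :
    phiMix d σ ζ = 2 * d / ((d + 1) * √(2 * π)) *
      (√(2 * π) / (2 * d) + gaussPrimitive (ζ / (2 * σ))) := by
  have hπ : 0 < √(2 * π) := by positivity
  rw [phiMix, show phi σ ζ = 2 / √(2 * π) * gaussPrimitive (ζ / (2 * σ)) from rfl]
  field_simp

theorem phiMix_mul_lt {d σ r a b A : ℝ} (hd : 0 < d) (hσ : 0 < σ)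
    (hr : f r (√(2 * π) / (2 * d)) = 0) (hb : 0 < b) (hbA : b < A) (hAa : A < a)
    (har : a / (2 * σ) ≤ r) :
    phiMix d σ A * phiMix d σ (a * b / A) < phiMix d σ a * phiMix d σ b := by
  have h2σ : 0 < 2 * σ := by positivity
  have key := add_gaussPrimitive_mul_lt (by positivity) hr (div_pos hb h2σ)
    (div_lt_div_of_pos_right hbA h2σ) (div_lt_div_of_pos_right hAa h2σ) har
  rw [show a / (2 * σ) * (b / (2 * σ)) / (A / (2 * σ)) = a * b / A / (2 * σ) by
    field_simp] at key
  have hK : 0 < 2 * d / ((d + 1) * √(2 * π)) := by positivity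
  simp only [phiMix_eq hd]
  nlinarith [mul_lt_mul_of_pos_left key (mul_pos hK hK)]

theorem stmt14_general (σ : ℝ) (hσ : 0 < σ) (d : ℕ) (hd : 1 ≤ d) (a b c δ : ℝ)
    (ha : 0 < a) (hb : 0 < b) (hδ2 : δ ≤ 1)
    (hcond : c ^ 2 + b ^ 2 < δ * a ^ 2)
    (rα : ℝ) (hrz : f rα (Real.sqrt (2 * Real.pi) / (2 * d)) = 0)
    (hcondr : a / (2 * σ) ≤ rα) :
    (1 / ((d : ℝ) + 1) + (d : ℝ) / ((d : ℝ) + 1) * phi σ a) *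
        (1 / ((d : ℝ) + 1) + (d : ℝ) / ((d : ℝ) + 1) * phi σ b) ≥
      (1 / ((d : ℝ) + 1) + (d : ℝ) / ((d : ℝ) + 1) * phi σ (Real.sqrt (c ^ 2 + b ^ 2))) *
        (1 / ((d : ℝ) + 1) +
          (d : ℝ) / ((d : ℝ) + 1) * phi σ (a * b / Real.sqrt (c ^ 2 + b ^ 2))) ∧
    ((1 / ((d : ℝ) + 1) + (d : ℝ) / ((d : ℝ) + 1) * phi σ a) *
        (1 / ((d : ℝ) + 1) + (d : ℝ) / ((d : ℝ) + 1) * phi σ b) =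
      (1 / ((d : ℝ) + 1) + (d : ℝ) / ((d : ℝ) + 1) * phi σ (Real.sqrt (c ^ 2 + b ^ 2))) *
        (1 / ((d : ℝ) + 1) +
          (d : ℝ) / ((d : ℝ) + 1) * phi σ (a * b / Real.sqrt (c ^ 2 + b ^ 2))) ↔ c = 0) := by
  change phiMix d σ a * phiMix d σ b ≥ phiMix d σ _ * phiMix d σ _ ∧
    (phiMix d σ a * phiMix d σ b = phiMix d σ _ * phiMix d σ _ ↔ c = 0)
  rcases eq_or_ne c 0 with rfl | hc
  · rw [zero_pow two_ne_zero, zero_add, sqrt_sq hb.le, mul_div_cancel_right₀ a hb.ne', mul_comm]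
    exact ⟨le_rfl, iff_of_true rfl rfl⟩
  · have hbA : b < √(c ^ 2 + b ^ 2) := (lt_sqrt hb.le).2 (by linarith [sq_pos_of_ne_zero hc])
    have hAa : √(c ^ 2 + b ^ 2) < a := (sqrt_lt' ha).2 (by nlinarith)
    have hlt := phiMix_mul_lt (by exact_mod_cast hd) hσ hrz hb hbA hAa hcondr
    exact ⟨hlt.le, fun h => absurd h hlt.ne', fun h => absurd h hc⟩

theorem stmt14 (σ : ℝ) (hσ : 0 < σ) (d : ℕ) (hd : 1 ≤ d) (a b c δ : ℝ)
    (ha : 0 < a) (hb : 0 < b) (hδ1 : 1 / 4 < δ) (hδ2 : δ ≤ 1)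
    (hcond : c ^ 2 + b ^ 2 < δ * a ^ 2)
    (rα : ℝ) (hr0 : 0 ≤ rα) (hrz : f rα (Real.sqrt (2 * Real.pi) / (2 * d)) = 0)
    (hcondr : a / (2 * σ) ≤ rα) :
    (1 / ((d : ℝ) + 1) + (d : ℝ) / ((d : ℝ) + 1) * phi σ a) *
        (1 / ((d : ℝ) + 1) + (d : ℝ) / ((d : ℝ) + 1) * phi σ b) ≥
      (1 / ((d : ℝ) + 1) + (d : ℝ) / ((d : ℝ) + 1) * phi σ (Real.sqrt (c ^ 2 + b ^ 2))) *
        (1 / ((d : ℝ) + 1) +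
          (d : ℝ) / ((d : ℝ) + 1) * phi σ (a * b / Real.sqrt (c ^ 2 + b ^ 2))) ∧
    ((1 / ((d : ℝ) + 1) + (d : ℝ) / ((d : ℝ) + 1) * phi σ a) *
        (1 / ((d : ℝ) + 1) + (d : ℝ) / ((d : ℝ) + 1) * phi σ b) =
      (1 / ((d : ℝ) + 1) + (d : ℝ) / ((d : ℝ) + 1) * phi σ (Real.sqrt (c ^ 2 + b ^ 2))) *
        (1 / ((d : ℝ) + 1) +
          (d : ℝ) / ((d : ℝ) + 1) * phi σ (a * b / Real.sqrt (c ^ 2 + b ^ 2))) ↔ c = 0) :=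
  stmt14_general σ hσ d hd a b c δ ha hb hδ2 hcond rα hrz hcondr
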